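/- Energy estimate for a perturbed scalar ODE: let λ > 0, p ≥ 1, T > 0, and let v, w be continuous on [0,T] with v absolutely continuous, v(0) = 0, and v'(t) + λ v(t) = λ w(t) for a.e. t. Then for all t ∈ [0,T]: |v(t)|^p + λ ∫₀ᵗ |v(τ)|^p dτ ≤ λ ∫₀ᵗ |w(τ)|^p dτ. In particular ‖v‖_{L^∞(0,T)} ≤ λ^{1/p} ‖w‖_{L^p(0,T)} and ‖v‖_{L^p(0,T)} ≤ ‖w‖_{L^p(0,T)}. -/

import Mathlib

/-!
Integrating the equation turns `v` into a continuous solution of `v t = ∫₀ᵗ λ (w - v)`, so `v` is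
given by Duhamel's formula `v t = ∫₀ᵗ λ e^{λ(s-t)} w s ds`. The kernel `λ e^{λ(s-t)}` has mass
`1 - e^{-λt} ≤ 1` on `[0, t]`, so Jensen's inequality bounds `|v t| ^ p` by the Duhamel solution `G`
with forcing `|w| ^ p`, and `G t + λ ∫₀ᵗ G = λ ∫₀ᵗ |w| ^ p` because `G` solves the same equation.
-/

open Real MeasureTheory intervalIntegral Set

theorem rpow_integral_mul_le_integral_mul_rpow {α : Type*} [MeasurableSpace α] {μ : Measure α}
    {k f : α → ℝ} {p : ℝ} (hp : 1 ≤ p) (hk : ∀ᵐ x ∂μ, 0 ≤ k x) (hf : ∀ᵐ x ∂μ, 0 ≤ f x)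
    (hk_int : Integrable k μ) (hkf_int : Integrable (fun x => k x * f x) μ)
    (hkfp_int : Integrable (fun x => k x * f x ^ p) μ) (hmass : ∫ x, k x ∂μ ≤ 1) :
    (∫ x, k x * f x ∂μ) ^ p ≤ ∫ x, k x * f x ^ p ∂μ := by
  set A := ∫ x, k x * f x ∂μ
  have hA : 0 ≤ A := integral_nonneg_of_ae <| by
    filter_upwards [hk, hf] with x hkx hfx using mul_nonneg hkx hfx
  rcases hA.eq_or_lt with hA0 | hApos
  · rw [← hA0, zero_rpow (by linarith)]
    exact integral_nonneg_of_ae <| by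
      filter_upwards [hk, hf] with x hkx hfx using mul_nonneg hkx (rpow_nonneg hfx p)
  -- Bernoulli's inequality is the tangent-line bound for `x ↦ x ^ p` at `A`.
  have tangent : ∀ᵐ x ∂μ,
      A ^ p * (1 - p) * k x + A ^ p * p / A * (k x * f x) ≤ k x * f x ^ p := by
    filter_upwards [hk, hf] with x hkx hfx
    have hB := one_add_mul_self_le_rpow_one_add (s := f x / A - 1)
      (by linarith [div_nonneg hfx hApos.le]) hp
    rw [add_sub_cancel, div_rpow hfx hApos.le] at hB
    have hApp : 0 < A ^ p := rpow_pos_of_pos hApos p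
    calc A ^ p * (1 - p) * k x + A ^ p * p / A * (k x * f x)
        = k x * (A ^ p * (1 + p * (f x / A - 1))) := by field_simp; ring
      _ ≤ k x * (A ^ p * (f x ^ p / A ^ p)) := by gcongr
      _ = k x * f x ^ p := by field_simp
  calc A ^ p ≤ A ^ p * (1 - p) * ∫ x, k x ∂μ + A ^ p * p / A * A := by
        have : 0 ≤ A ^ p * ((p - 1) * (1 - ∫ x, k x ∂μ)) :=
          mul_nonneg (rpow_nonneg hA p) (mul_nonneg (by linarith) (by linarith))
        field_simp
        nlinarith
    _ = ∫ x, (A ^ p * (1 - p) * k x + A ^ p * p / A * (k x * f x)) ∂μ := by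
        rw [integral_add (hk_int.const_mul _) (hkf_int.const_mul _),
          MeasureTheory.integral_const_mul, MeasureTheory.integral_const_mul]
    _ ≤ ∫ x, k x * f x ^ p ∂μ :=
        integral_mono_ae ((hk_int.const_mul _).add (hkf_int.const_mul _)) hkfp_int tangent

section Primitive

variable {g : ℝ → ℝ} {a b : ℝ}

theorem continuousOn_primitive_of_continuousOn (hg : ContinuousOn g (Icc a b)) :
    ContinuousOn (fun t => ∫ s in a..t, g s) (Icc a b) := by
  rcases le_or_gt a b with hab | hab
  · rw [← uIcc_of_le hab] at hg ⊢
    exact continuousOn_primitive_interval hg.integrableOn_uIcc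
  · simp [Icc_eq_empty_of_lt hab]

theorem hasDerivAt_primitive_of_continuousOn (hg : ContinuousOn g (Icc a b)) {x : ℝ}
    (hx : x ∈ Ioo a b) : HasDerivAt (fun t => ∫ s in a..t, g s) (g x) x :=
  integral_hasDerivAt_right
    ((hg.mono (Icc_subset_Icc_right hx.2.le)).intervalIntegrable_of_Icc hx.1.le)
    ((hg.mono Ioo_subset_Icc_self).stronglyMeasurableAtFilter isOpen_Ioo x hx)
    (hg.continuousAt (Icc_mem_nhds hx.1 hx.2))

end Primitive

noncomputable def duhamel (lam : ℝ) (f : ℝ → ℝ) (t : ℝ) : ℝ :=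
  ∫ s in (0:ℝ)..t, lam * exp (lam * (s - t)) * f s

theorem duhamel_eq_exp_mul (lam : ℝ) (f : ℝ → ℝ) (t : ℝ) :
    duhamel lam f t = exp (-(lam * t)) * ∫ s in (0:ℝ)..t, lam * exp (lam * s) * f s := by
  rw [duhamel, ← intervalIntegral.integral_const_mul]
  congr 1 with s
  rw [mul_sub, sub_eq_add_neg, exp_add]
  ring

section Duhamel

variable {lam T : ℝ} {f : ℝ → ℝ}

theorem continuousOn_duhamel (hf : ContinuousOn f (Icc 0 T)) :
    ContinuousOn (duhamel lam f) (Icc 0 T) := by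
  rw [funext (duhamel_eq_exp_mul lam f)]
  exact (continuous_exp.comp_continuousOn (by fun_prop)).mul
    (continuousOn_primitive_of_continuousOn (by fun_prop))

theorem hasDerivAt_duhamel (hf : ContinuousOn f (Icc 0 T)) {x : ℝ} (hx : x ∈ Ioo 0 T) :
    HasDerivAt (duhamel lam f) (lam * (f x - duhamel lam f x)) x := by
  rw [funext (duhamel_eq_exp_mul lam f)]
  have hexp : HasDerivAt (fun t => exp (-(lam * t))) (exp (-(lam * x)) * -lam) x := by
    simpa using ((hasDerivAt_id x).const_mul lam).neg.exp
  refine (hexp.mul (hasDerivAt_primitive_of_continuousOn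
    (g := fun s => lam * exp (lam * s) * f s) (by fun_prop) hx)).congr_deriv ?_
  have hinv : exp (-(lam * x)) * exp (lam * x) = 1 := by rw [← exp_add, neg_add_cancel, exp_zero]
  linear_combination (lam * f x) * hinv

theorem duhamel_add_mul_integral (hf : ContinuousOn f (Icc 0 T)) {t : ℝ} (ht : t ∈ Icc 0 T) :
    duhamel lam f t + lam * ∫ s in (0:ℝ)..t, duhamel lam f s = lam * ∫ s in (0:ℝ)..t, f s := by
  have hsub : Icc 0 t ⊆ Icc 0 T := Icc_subset_Icc_right ht.2
  have hD := continuousOn_duhamel (lam := lam) hf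
  have hFTC := integral_eq_sub_of_hasDerivAt_of_le ht.1 (hD.mono hsub)
    (fun x hx => hasDerivAt_duhamel hf (Ioo_subset_Ioo_right ht.2 hx))
    (((hf.sub hD).const_smul lam).mono hsub |>.intervalIntegrable_of_Icc ht.1)
  rw [intervalIntegral.integral_const_mul, intervalIntegral.integral_sub
    ((hf.mono hsub).intervalIntegrable_of_Icc ht.1) ((hD.mono hsub).intervalIntegrable_of_Icc ht.1)]
    at hFTC
  rw [show duhamel lam f 0 = 0 from integral_same, sub_zero] at hFTC
  linarith

theorem eq_duhamel_of_eq_integral {u : ℝ → ℝ} (hu : ContinuousOn u (Icc 0 T))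
    (hf : ContinuousOn f (Icc 0 T))
    (hint : ∀ t ∈ Icc 0 T, u t = ∫ s in (0:ℝ)..t, lam * (f s - u s)) :
    ∀ t ∈ Icc 0 T, u t = duhamel lam f t := by
  intro t ht
  have hsub : Icc 0 t ⊆ Icc 0 T := Icc_subset_Icc_right ht.2
  have hderiv : ∀ x ∈ Ioo 0 T, HasDerivAt u (lam * (f x - u x)) x := fun x hx =>
    (hasDerivAt_primitive_of_continuousOn (g := fun s => lam * (f s - u s)) (by fun_prop)
      hx).congr_of_eventuallyEq (Filter.eventually_of_mem (Icc_mem_nhds hx.1 hx.2) hint)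
  have hFTC := integral_eq_sub_of_hasDerivAt_of_le (f := fun s => exp (lam * s) * u s)
    (f' := fun s => lam * exp (lam * s) * f s) ht.1
    ((continuous_exp.comp (continuous_const_mul lam)).continuousOn.mul (hu.mono hsub))
    (fun x hx => ((((hasDerivAt_id' x).const_mul lam).exp).mul
      (hderiv x (Ioo_subset_Ioo_right ht.2 hx))).congr_deriv (by ring))
    ((by fun_prop : ContinuousOn (fun s => lam * exp (lam * s) * f s) (Icc 0 T)).mono hsub
      |>.intervalIntegrable_of_Icc ht.1)
  have hu0 : u 0 = 0 := by simpa using hint 0 (left_mem_Icc.2 (ht.1.trans ht.2))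
  rw [duhamel_eq_exp_mul, hFTC, hu0, mul_zero, sub_zero, ← mul_assoc, ← exp_add, neg_add_cancel,
    exp_zero, one_mul]

theorem duhamel_one (lam t : ℝ) : duhamel lam (fun _ => 1) t = 1 - exp (-(lam * t)) := by
  have hderiv : ∀ s ∈ uIcc 0 t,
      HasDerivAt (fun s => exp (lam * (s - t))) (lam * exp (lam * (s - t)) * 1) s := fun s _ =>
    (((hasDerivAt_id' s).sub_const t).const_mul lam).exp.congr_deriv (by ring)
  rw [duhamel, integral_eq_sub_of_hasDerivAt hderiv
    (Continuous.intervalIntegrable (by fun_prop) _ _)]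
  simp

theorem abs_duhamel_rpow_le {p t : ℝ} (hlam : 0 ≤ lam) (hp : 1 ≤ p) (ht : 0 ≤ t)
    (hf : ContinuousOn f (Icc 0 t)) :
    |duhamel lam f t| ^ p ≤ duhamel lam (fun s => |f s| ^ p) t := by
  have hp0 : 0 < p := by linarith
  have hk : ∀ s, 0 ≤ lam * exp (lam * (s - t)) := fun s => mul_nonneg hlam (exp_pos _).le
  have hint : ∀ g : ℝ → ℝ, ContinuousOn g (Icc 0 t) →
      IntegrableOn (fun s => lam * exp (lam * (s - t)) * g s) (Ioc 0 t) := fun g hg =>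
    ((by fun_prop : ContinuousOn _ (Icc 0 t)).integrableOn_Icc).mono_set Ioc_subset_Icc_self
  have habs : |duhamel lam f t| ≤ duhamel lam (fun s => |f s|) t := by
    refine (abs_integral_le_integral_abs ht).trans_eq (integral_congr fun s _ => ?_)
    simp only [abs_mul, abs_of_nonneg (hk s)]
  have hmass : ∫ s in Ioc 0 t, lam * exp (lam * (s - t)) ≤ 1 := by
    have := duhamel_one lam t
    simp only [duhamel, mul_one, integral_of_le ht] at this
    linarith [exp_pos (-(lam * t))]
  calc |duhamel lam f t| ^ p ≤ duhamel lam (fun s => |f s|) t ^ p :=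
        rpow_le_rpow (abs_nonneg _) habs hp0.le
    _ ≤ duhamel lam (fun s => |f s| ^ p) t := by
        simp only [duhamel, integral_of_le ht]
        exact rpow_integral_mul_le_integral_mul_rpow hp (ae_of_all _ hk)
          (ae_of_all _ fun s => abs_nonneg (f s))
          (by simpa [IntegrableOn] using hint (fun _ => 1) continuousOn_const) (hint _ hf.abs)
          (hint _ (hf.abs.rpow_const fun _ _ => Or.inr hp0.le)) hmass

theorem abs_duhamel_rpow_add_mul_integral_le {p : ℝ} (hlam : 0 ≤ lam) (hp : 1 ≤ p)
    (hf : ContinuousOn f (Icc 0 T)) {t : ℝ} (ht : t ∈ Icc 0 T) :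
    |duhamel lam f t| ^ p + lam * ∫ s in (0:ℝ)..t, |duhamel lam f s| ^ p ≤
      lam * ∫ s in (0:ℝ)..t, |f s| ^ p := by
  have hp0 : 0 ≤ p := by linarith
  have hsub : Icc 0 t ⊆ Icc 0 T := Icc_subset_Icc_right ht.2
  have hbound : ∀ s ∈ Icc 0 t, |duhamel lam f s| ^ p ≤ duhamel lam (fun s => |f s| ^ p) s :=
    fun s hs => abs_duhamel_rpow_le hlam hp hs.1
      (hf.mono (Icc_subset_Icc_right (hs.2.trans ht.2)))
  have hfp : ContinuousOn (fun s => |f s| ^ p) (Icc 0 T) := hf.abs.rpow_const fun _ _ => Or.inr hp0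
  calc |duhamel lam f t| ^ p + lam * ∫ s in (0:ℝ)..t, |duhamel lam f s| ^ p
      ≤ duhamel lam (fun s => |f s| ^ p) t +
          lam * ∫ s in (0:ℝ)..t, duhamel lam (fun s => |f s| ^ p) s := by
        gcongr ?_ + lam * ?_
        · exact hbound t (right_mem_Icc.2 ht.1)
        · refine integral_mono_on ht.1 ?_ ?_ hbound
          · exact (((continuousOn_duhamel hf).abs.rpow_const fun _ _ => Or.inr hp0).mono
              hsub).intervalIntegrable_of_Icc ht.1
          · exact ((continuousOn_duhamel hfp).mono hsub).intervalIntegrable_of_Icc ht.1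
    _ = lam * ∫ s in (0:ℝ)..t, |f s| ^ p := duhamel_add_mul_integral hfp ht

end Duhamel

theorem energy_estimate_perturbed_ode_general (lam p T : ℝ) (hlam : 0 < lam) (hp : 1 ≤ p)
    (hT : 0 < T) (v v' w : ℝ → ℝ)
    (hvc : ContinuousOn v (Set.Icc 0 T)) (hwc : ContinuousOn w (Set.Icc 0 T))
    (hAC : ∀ t ∈ Set.Icc (0:ℝ) T, v t = ∫ τ in (0:ℝ)..t, v' τ)
    (hode : ∀ᵐ t ∂(volume.restrict (Set.Ioc (0:ℝ) T)), v' t + lam * v t = lam * w t) :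
    (∀ t ∈ Set.Icc (0:ℝ) T,
      |v t| ^ p + lam * ∫ τ in (0:ℝ)..t, |v τ| ^ p ≤ lam * ∫ τ in (0:ℝ)..t, |w τ| ^ p) ∧
    (∀ t ∈ Set.Icc (0:ℝ) T,
      |v t| ≤ lam ^ (1/p) * (∫ τ in (0:ℝ)..T, |w τ| ^ p) ^ (1/p)) ∧
    (∫ τ in (0:ℝ)..T, |v τ| ^ p) ^ (1/p) ≤ (∫ τ in (0:ℝ)..T, |w τ| ^ p) ^ (1/p) := by
  have hp0 : 0 < p := by linarith
  have hv : ∀ t ∈ Icc 0 T, v t = duhamel lam w t := by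
    refine eq_duhamel_of_eq_integral hvc hwc fun t ht => (hAC t ht).trans (integral_congr_ae ?_)
    filter_upwards [(ae_restrict_iff' measurableSet_Ioc).1 hode] with s hs hst
    rw [uIoc_of_le ht.1] at hst
    linarith [hs (Ioc_subset_Ioc_right ht.2 hst)]
  have energy : ∀ t ∈ Icc 0 T,
      |v t| ^ p + lam * ∫ s in (0:ℝ)..t, |v s| ^ p ≤ lam * ∫ s in (0:ℝ)..t, |w s| ^ p := by
    intro t ht
    rw [hv t ht, integral_congr fun s hs => by
      rw [hv s (Icc_subset_Icc_right ht.2 (uIcc_of_le ht.1 ▸ hs))]]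
    exact abs_duhamel_rpow_add_mul_integral_le hlam.le hp hwc ht
  have hnonneg : ∀ (g : ℝ → ℝ) (t : ℝ), 0 ≤ t → 0 ≤ ∫ s in (0:ℝ)..t, |g s| ^ p :=
    fun g t ht => integral_nonneg ht fun s _ => rpow_nonneg (abs_nonneg (g s)) p
  refine ⟨energy, fun t ht => ?_, ?_⟩
  · have hW : ∫ s in (0:ℝ)..t, |w s| ^ p ≤ ∫ s in (0:ℝ)..T, |w s| ^ p :=
      integral_mono_interval le_rfl ht.1 ht.2
        (Filter.Eventually.of_forall fun s => rpow_nonneg (abs_nonneg (w s)) p)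
        ((hwc.abs.rpow_const fun _ _ => Or.inr hp0.le).intervalIntegrable_of_Icc hT.le)
    rw [← mul_rpow hlam.le (hnonneg w T hT.le), one_div,
      le_rpow_inv_iff_of_pos (abs_nonneg _) (mul_nonneg hlam.le (hnonneg w T hT.le)) hp0]
    nlinarith [energy t ht, hnonneg v t ht.1]
  · have henergyT := energy T (right_mem_Icc.2 hT.le)
    refine rpow_le_rpow (hnonneg v T hT.le) (le_of_mul_le_mul_left ?_ hlam) (by positivity)
    linarith [rpow_nonneg (abs_nonneg (v T)) p]

theorem energy_estimate_perturbed_ode (lam p T : ℝ) (hlam : 0 < lam) (hp : 1 ≤ p)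
    (hT : 0 < T) (v v' w : ℝ → ℝ)
    (hvc : ContinuousOn v (Set.Icc 0 T)) (hwc : ContinuousOn w (Set.Icc 0 T))
    (hv'int : IntegrableOn v' (Set.Ioc 0 T))
    (hAC : ∀ t ∈ Set.Icc (0:ℝ) T, v t = ∫ τ in (0:ℝ)..t, v' τ)
    (hode : ∀ᵐ t ∂(volume.restrict (Set.Ioc (0:ℝ) T)), v' t + lam * v t = lam * w t) :
    (∀ t ∈ Set.Icc (0:ℝ) T,
      |v t| ^ p + lam * ∫ τ in (0:ℝ)..t, |v τ| ^ p ≤ lam * ∫ τ in (0:ℝ)..t, |w τ| ^ p) ∧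
    (∀ t ∈ Set.Icc (0:ℝ) T,
      |v t| ≤ lam ^ (1/p) * (∫ τ in (0:ℝ)..T, |w τ| ^ p) ^ (1/p)) ∧
    (∫ τ in (0:ℝ)..T, |v τ| ^ p) ^ (1/p) ≤ (∫ τ in (0:ℝ)..T, |w τ| ^ p) ^ (1/p) :=
  energy_estimate_perturbed_ode_general lam p T hlam hp hT v v' w hvc hwc hAC hode
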